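/- Let z₁, z₂ > 0, s > 0, and define F_{z₁,z₂}(r) = arcosh(1 + (r² + (z₁ − z₂)²)/(2·z₁·z₂)). Then ∫_0^∞ √(2/π)·e^{−z²/2} · F_{z₁,z₂}(s·z) dz ≤ F_{z₁,z₂}(s). -/

import Mathlib

open Real MeasureTheory

/-- The inverse hyperbolic cosine. -/
noncomputable def arcosh (x : ℝ) : ℝ := Real.log (x + Real.sqrt (x ^ 2 - 1))

/-- The hyperbolic distance, in the Poincaré half-space model, between two points
with heights `z₁, z₂` whose horizontal coordinates are at Euclidean distance `r`. -/
noncomputable def F (z₁ z₂ r : ℝ) : ℝ :=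
  _root_.arcosh (1 + (r ^ 2 + (z₁ - z₂) ^ 2) / (2 * z₁ * z₂))

/-! `F z₁ z₂ r = arcosh (A + B r²)` with `B > 0`, and `arcosh` is concave on `[1, ∞)`. Bounding it
by its tangent line at `A + B s²` gives `F z₁ z₂ (s z) ≤ F z₁ z₂ s + K s² (z² - 1)` for every `z`,
and the linear term integrates to zero against the half-normal density because `E[Z²] = 1`. -/

open Set

theorem ConcaveOn.le_add_mul_sub_of_hasDerivAt {S : Set ℝ} {f : ℝ → ℝ} {f' x y : ℝ}
    (hf : ConcaveOn ℝ S f) (hx : x ∈ S) (hy : y ∈ S) (hf' : HasDerivAt f f' y) :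
    f x ≤ f y + f' * (x - y) := by
  rcases lt_trichotomy x y with hxy | rfl | hyx
  · have h := hf.le_slope_of_hasDerivAt hx hy hxy hf'
    rw [slope_def_field, le_div_iff₀ (sub_pos.2 hxy)] at h
    linarith
  · simp
  · have h := hf.slope_le_of_hasDerivAt hy hx hyx hf'
    rw [slope_def_field, div_le_iff₀ (sub_pos.2 hyx)] at h
    linarith

theorem Real.concaveOn_arcosh : ConcaveOn ℝ (Ici 1) Real.arcosh := by
  refine AntitoneOn.concaveOn_of_deriv (convex_Ici 1) Real.continuousOn_arcosh ?_ ?_ <;>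
    rw [interior_Ici]
  · exact Real.differentiableOn_arcosh
  · intro x (hx : 1 < x) y (hy : 1 < y) hxy
    rw [(Real.hasDerivAt_arcosh hx).deriv, (Real.hasDerivAt_arcosh hy).deriv]
    exact inv_anti₀ (Real.sqrt_pos.2 (by nlinarith)) (Real.sqrt_le_sqrt (by nlinarith))

lemma F_nonneg {z₁ z₂ : ℝ} (hz : 0 ≤ z₁ * z₂) (r : ℝ) : 0 ≤ F z₁ z₂ r :=
  Real.arcosh_nonneg (le_add_of_nonneg_right (by rw [mul_assoc]; positivity))

lemma exists_F_le_add_mul_sq_sub_sq {z₁ z₂ s : ℝ} (hz : 0 < z₁ * z₂) (hs : s ≠ 0) :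
    ∃ K, ∀ r, F z₁ z₂ r ≤ F z₁ z₂ s + K * (r ^ 2 - s ^ 2) := by
  have h2z : 0 < 2 * z₁ * z₂ := by rw [mul_assoc]; positivity
  set A : ℝ → ℝ := fun r => 1 + (r ^ 2 + (z₁ - z₂) ^ 2) / (2 * z₁ * z₂)
  have hA : ∀ r, 1 ≤ A r := fun r => le_add_of_nonneg_right (by positivity)
  have hAs : 1 < A s := lt_add_of_pos_right _ (by positivity)
  refine ⟨(√(A s ^ 2 - 1))⁻¹ / (2 * z₁ * z₂), fun r => ?_⟩
  have hAr : A r - A s = (r ^ 2 - s ^ 2) / (2 * z₁ * z₂) := by simp only [A]; ring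
  -- `_root_.arcosh` is `Real.arcosh` by definition, so `F z₁ z₂ r` is `Real.arcosh (A r)`.
  calc F z₁ z₂ r ≤ Real.arcosh (A s) + (√(A s ^ 2 - 1))⁻¹ * (A r - A s) :=
        Real.concaveOn_arcosh.le_add_mul_sub_of_hasDerivAt (hA r) (hA s)
          (Real.hasDerivAt_arcosh hAs)
    _ = F z₁ z₂ s + (√(A s ^ 2 - 1))⁻¹ / (2 * z₁ * z₂) * (r ^ 2 - s ^ 2) := by
        rw [hAr]; change F z₁ z₂ s + _ = _; ring

theorem integrableOn_sq_mul_exp_neg_mul_sq_Ioi {b : ℝ} (hb : 0 < b) :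
    IntegrableOn (fun x : ℝ => x ^ 2 * exp (-b * x ^ 2)) (Ioi 0) := by
  simpa only [Real.rpow_two] using integrableOn_rpow_mul_exp_neg_mul_sq hb (s := 2) (by norm_num)

theorem integral_sq_mul_exp_neg_mul_sq_Ioi {b : ℝ} (hb : 0 < b) :
    ∫ x in Ioi (0 : ℝ), x ^ 2 * exp (-b * x ^ 2) = √(π / b) / (4 * b) := by
  have h := integral_rpow_mul_exp_neg_mul_rpow two_pos (by norm_num : (-1 : ℝ) < 2) hb
  simp only [Real.rpow_two] at h
  rw [h, show (2 + 1) / 2 = (1 / 2 : ℝ) + 1 by norm_num, Real.Gamma_add_one (by norm_num),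
    Real.Gamma_one_half_eq, show -(2 + 1) / 2 = -(1 + 1 / 2 : ℝ) by norm_num,
    Real.rpow_neg hb.le, Real.rpow_add hb, Real.rpow_one, ← Real.sqrt_eq_rpow, Real.sqrt_div' _ hb.le]
  field_simp
  ring

lemma halfNormal_mul_add_mul_sq_sub_one (a c z : ℝ) :
    √(2 / π) * exp (-z ^ 2 / 2) * (a + c * (z ^ 2 - 1)) =
      √(2 / π) * (a - c) * exp (-(1 / 2) * z ^ 2) +
        √(2 / π) * c * (z ^ 2 * exp (-(1 / 2) * z ^ 2)) := by
  rw [show -z ^ 2 / 2 = -(1 / 2) * z ^ 2 by ring]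
  ring

theorem integrableOn_halfNormal_mul_add_mul_sq_sub_one (a c : ℝ) :
    IntegrableOn (fun z => √(2 / π) * exp (-z ^ 2 / 2) * (a + c * (z ^ 2 - 1))) (Ioi 0) := by
  simp only [halfNormal_mul_add_mul_sq_sub_one]
  exact ((integrable_exp_neg_mul_sq (by norm_num)).integrableOn.const_mul _).add
    ((integrableOn_sq_mul_exp_neg_mul_sq_Ioi (by norm_num)).const_mul _)

theorem integral_halfNormal_mul_add_mul_sq_sub_one (a c : ℝ) :
    ∫ z in Ioi (0 : ℝ), √(2 / π) * exp (-z ^ 2 / 2) * (a + c * (z ^ 2 - 1)) = a := by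
  simp only [halfNormal_mul_add_mul_sq_sub_one]
  rw [integral_add ((integrable_exp_neg_mul_sq (by norm_num)).integrableOn.const_mul _)
      ((integrableOn_sq_mul_exp_neg_mul_sq_Ioi (by norm_num)).const_mul _),
    integral_const_mul, integral_const_mul, integral_gaussian_Ioi,
    integral_sq_mul_exp_neg_mul_sq_Ioi (by norm_num)]
  have h : √(2 / π) * √(π / (1 / 2)) = 2 := by
    rw [← Real.sqrt_mul (by positivity), show 2 / π * (π / (1 / 2)) = 2 ^ 2 by field_simp,
      Real.sqrt_sq zero_le_two]
  linear_combination (a / 2) * h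

/-- Lemma 4.4: the expected projected hyperbolic distance is at most
`F_{z₁,z₂}(s)`. -/
theorem expected_projected_distance_upper_bound
    (z₁ z₂ s : ℝ) (hz₁ : 0 < z₁) (hz₂ : 0 < z₂) (hs : 0 < s) :
    ∫ z in Set.Ioi (0 : ℝ),
        Real.sqrt (2 / π) * Real.exp (-z ^ 2 / 2) * F z₁ z₂ (s * z) ≤
      F z₁ z₂ s := by
  obtain ⟨K, hK⟩ := exists_F_le_add_mul_sq_sub_sq (mul_pos hz₁ hz₂) hs.ne'
  have hw : ∀ z : ℝ, 0 ≤ √(2 / π) * exp (-z ^ 2 / 2) := fun z => by positivity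
  calc _ ≤ ∫ z in Ioi (0 : ℝ),
          √(2 / π) * exp (-z ^ 2 / 2) * (F z₁ z₂ s + K * s ^ 2 * (z ^ 2 - 1)) :=
        integral_mono_of_nonneg
          (ae_of_all _ fun z => mul_nonneg (hw z) (F_nonneg (mul_pos hz₁ hz₂).le _))
          (integrableOn_halfNormal_mul_add_mul_sq_sub_one _ _)
          (ae_of_all _ fun z =>
            mul_le_mul_of_nonneg_left ((hK (s * z)).trans_eq (by ring)) (hw z))
    _ = F z₁ z₂ s := integral_halfNormal_mul_add_mul_sq_sub_one _ _
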